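/- The transformation distance d on k-clusterings of a fixed finite data set is a metric: d(C, C') = 0 iff C = C', d is symmetric, and d satisfies the triangle inequality. -/

import Mathlib

/-!
An elementary move can be undone by reversing its cycle or path, move sequences concatenate,
and relabelling a single item is a (path) move, so every clustering is reached from every
other one. The transformation distance is therefore the path metric of the (symmetric,
connected) move graph.
-/

variable {X : Type*} [Fintype X] [DecidableEq X] {k : ℕ}

/-- The clustering-difference graph `CDG(c, c'')` (one edge `c x → c'' x` for each
item `x` with `c x ≠ c'' x`) is a single directed cycle: there are `m + 1` distinct
cluster indices `v 0, ..., v m` and the items moved are exactly one per edge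
`v i → v (i+1)` (indices mod `m + 1`). -/
def IsCyclicalMove (c c'' : X → Fin k) : Prop :=
  ∃ (m : ℕ) (v : Fin (m + 1) ↪ Fin k)
    (e : {x : X // c x ≠ c'' x} ≃ Fin (m + 1)),
    ∀ x : {x : X // c x ≠ c'' x}, c x.1 = v (e x) ∧ c'' x.1 = v (e x + 1)

/-- The clustering-difference graph `CDG(c, c'')` is a single directed path: there
are `m + 2` distinct cluster indices `v 0, ..., v (m+1)` and the items moved are
exactly one per edge `v i → v (i+1)`, `0 ≤ i ≤ m`. -/
def IsSequentialMove (c c'' : X → Fin k) : Prop :=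
  ∃ (m : ℕ) (v : Fin (m + 2) ↪ Fin k)
    (e : {x : X // c x ≠ c'' x} ≃ Fin (m + 1)),
    ∀ x : {x : X // c x ≠ c'' x}, c x.1 = v (e x).castSucc ∧ c'' x.1 = v (e x).succ

/-- An elementary move: a cyclical or a sequential move. -/
def IsMove (c c'' : X → Fin k) : Prop :=
  IsCyclicalMove c c'' ∨ IsSequentialMove c c''

/-- The transformation distance: the minimum number of elementary moves needed to
transform `c` into `c'`. -/
noncomputable def transDist (c c' : X → Fin k) : ℕ :=
  sInf {n | ∃ f : ℕ → X → Fin k, f 0 = c ∧ f n = c' ∧ ∀ i < n, IsMove (f i) (f (i + 1))}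

/-- The size of cluster `i` in the clustering `c`. -/
def clusterSize (c : X → Fin k) (i : Fin k) : ℕ :=
  (Finset.univ.filter fun x => c x = i).card

/-- The outdegree of vertex `i` in `CDG(c, c')`. -/
def cdgOutdeg (c c' : X → Fin k) (i : Fin k) : ℕ :=
  (Finset.univ.filter fun x => c x = i ∧ c' x ≠ i).card

/-- The indegree of vertex `i` in `CDG(c, c')`. -/
def cdgIndeg (c c' : X → Fin k) (i : Fin k) : ℕ :=
  (Finset.univ.filter fun x => c' x = i ∧ c x ≠ i).card

/-- The shared degree of vertex `i` in `CDG(c, c')`. -/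
def sharedDeg (c c' : X → Fin k) (i : Fin k) : ℕ :=
  min (cdgIndeg c c' i) (cdgOutdeg c c' i)

namespace Relation

variable {α : Type*} {r : α → α → Prop} {a b c : α} {m n : ℕ}

def chainLengths (r : α → α → Prop) (a b : α) : Set ℕ :=
  {n | ∃ f : ℕ → α, f 0 = a ∧ f n = b ∧ ∀ i < n, r (f i) (f (i + 1))}

theorem zero_mem_chainLengths_iff : 0 ∈ chainLengths r a b ↔ a = b := by
  constructor
  · rintro ⟨f, rfl, rfl, -⟩
    rfl
  · rintro rfl
    exact ⟨fun _ => a, rfl, rfl, fun i hi => absurd hi (Nat.not_lt_zero i)⟩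

theorem one_mem_chainLengths (h : r a b) : 1 ∈ chainLengths r a b :=
  ⟨fun i => if i = 0 then a else b, rfl, rfl, fun i hi => by
    obtain rfl : i = 0 := by omega
    simpa using h⟩

theorem add_mem_chainLengths (hm : m ∈ chainLengths r a b) (hn : n ∈ chainLengths r b c) :
    m + n ∈ chainLengths r a c := by
  obtain ⟨f, rfl, hfm, hf⟩ := hm
  obtain ⟨g, rfl, rfl, hg⟩ := hn
  refine ⟨fun i => if i ≤ m then f i else g (i - m), by simp, ?_, fun i hi => ?_⟩
  · rcases n.eq_zero_or_pos with rfl | hn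
    · simpa using hfm
    · simp [show ¬m + n ≤ m by omega]
  rcases lt_trichotomy i m with hi | rfl | hi
  · simpa [hi.le, Nat.succ_le_of_lt hi] using hf i hi
  · simpa [hfm] using hg 0 (by omega)
  · have := hg (i - m) (by omega)
    rw [show i - m + 1 = i + 1 - m by omega] at this
    simpa [hi.not_ge, (hi.trans (Nat.lt_succ_self i)).not_ge] using this

theorem chainLengths_comm [Std.Symm r] (a b : α) : chainLengths r a b = chainLengths r b a := by
  suffices ∀ a b, chainLengths r a b ⊆ chainLengths r b a from (this a b).antisymm (this b a)
  rintro a b n ⟨f, rfl, rfl, hf⟩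
  refine ⟨fun i => f (n - i), by simp, by simp, fun i hi => ?_⟩
  have := Std.Symm.symm _ _ (hf (n - (i + 1)) (by omega))
  rwa [show n - (i + 1) + 1 = n - i by omega] at this

theorem sInf_chainLengths_eq_zero_iff (h : (chainLengths r a b).Nonempty) :
    sInf (chainLengths r a b) = 0 ↔ a = b := by
  rw [Nat.sInf_eq_zero, or_iff_left h.ne_empty, zero_mem_chainLengths_iff]

theorem sInf_chainLengths_le_add (hab : (chainLengths r a b).Nonempty)
    (hbc : (chainLengths r b c).Nonempty) :
    sInf (chainLengths r a c) ≤ sInf (chainLengths r a b) + sInf (chainLengths r b c) :=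
  Nat.sInf_le (add_mem_chainLengths (Nat.sInf_mem hab) (Nat.sInf_mem hbc))

end Relation

open Relation

omit [Fintype X] [DecidableEq X] in
theorem transDist_eq_sInf_chainLengths (c c' : X → Fin k) :
    transDist c c' = sInf (chainLengths IsMove c c') :=
  rfl

omit [Fintype X] [DecidableEq X] in
theorem IsCyclicalMove.symm {c c'' : X → Fin k} (h : IsCyclicalMove c c'') :
    IsCyclicalMove c'' c := by
  obtain ⟨m, v, e, he⟩ := h
  refine ⟨m, (Equiv.neg _).toEmbedding.trans v,
    ((Equiv.subtypeEquivRight fun _ => ne_comm).trans e).trans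
      ((Equiv.neg _).trans (Equiv.subRight 1)), fun x => ?_⟩
  obtain ⟨h₁, h₂⟩ := he (Equiv.subtypeEquivRight (fun _ => ne_comm) x)
  exact ⟨h₂.trans (congrArg v (by simp [add_comm])), h₁.trans (congrArg v (by simp))⟩

omit [Fintype X] [DecidableEq X] in
theorem IsSequentialMove.symm {c c'' : X → Fin k} (h : IsSequentialMove c c'') :
    IsSequentialMove c'' c := by
  obtain ⟨m, v, e, he⟩ := h
  refine ⟨m, Fin.revPerm.toEmbedding.trans v,
    ((Equiv.subtypeEquivRight fun _ => ne_comm).trans e).trans Fin.revPerm, fun x => ?_⟩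
  obtain ⟨h₁, h₂⟩ := he (Equiv.subtypeEquivRight (fun _ => ne_comm) x)
  exact ⟨h₂.trans (congrArg v (by simp [Fin.rev_castSucc])),
    h₁.trans (congrArg v (by simp [Fin.rev_succ]))⟩

omit [Fintype X] [DecidableEq X] in
instance : Std.Symm (IsMove (X := X) (k := k)) :=
  ⟨fun _ _ h => h.imp IsCyclicalMove.symm IsSequentialMove.symm⟩

omit [Fintype X] in
theorem isMove_update {c : X → Fin k} {x : X} {b : Fin k} (h : c x ≠ b) :
    IsMove c (Function.update c x b) := by
  have hmoved : ∀ y, c y ≠ Function.update c x b y ↔ y = x := by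
    intro y
    rcases eq_or_ne y x with rfl | hy
    · simpa using h
    · simp [hy]
  refine Or.inr ⟨0, ⟨![c x, b], ?_⟩,
    (Equiv.subtypeEquivRight hmoved).trans (Equiv.ofUnique _ (Fin 1)), ?_⟩
  · intro i j
    fin_cases i <;> fin_cases j <;> simp [h, h.symm]
  · rintro ⟨y, hy⟩
    obtain rfl := (hmoved y).1 hy
    simp only [Function.update_self]
    exact ⟨rfl, rfl⟩

theorem chainLengths_isMove_nonempty (c c' : X → Fin k) :
    (chainLengths IsMove c c').Nonempty := by
  suffices ∀ (s : Finset X) (c : X → Fin k), (∀ x, c x ≠ c' x → x ∈ s) →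
      (chainLengths IsMove c c').Nonempty from this Finset.univ c fun x _ => Finset.mem_univ x
  intro s
  induction s using Finset.induction_on with
  | empty =>
    intro c hc
    exact ⟨0, zero_mem_chainLengths_iff.2 (funext fun x => by_contra fun h => by simpa using hc x h)⟩
  | insert x s _ ih =>
    intro c hc
    by_cases hcx : c x = c' x
    · refine ih c fun y hy => (Finset.mem_insert.1 (hc y hy)).resolve_left ?_
      rintro rfl
      exact hy hcx
    · obtain ⟨n, hn⟩ := ih (Function.update c x (c' x)) fun y hy => by
        rcases eq_or_ne y x with rfl | hyx
        · simp at hy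
        · rw [Function.update_of_ne hyx] at hy
          exact (Finset.mem_insert.1 (hc y hy)).resolve_left hyx
      exact ⟨1 + n, add_mem_chainLengths (one_mem_chainLengths (isMove_update hcx)) hn⟩

/-- The transformation distance is a metric on `k`-clusterings of a fixed finite
data set: it vanishes exactly on equal clusterings, is symmetric, and satisfies
the triangle inequality. -/
theorem stmt_16 (c c' c'' : X → Fin k) :
    (transDist c c' = 0 ↔ c = c') ∧
    transDist c c' = transDist c' c ∧
    transDist c c'' ≤ transDist c c' + transDist c' c'' := by
  simp only [transDist_eq_sInf_chainLengths]
  exact ⟨sInf_chainLengths_eq_zero_iff (chainLengths_isMove_nonempty c c'),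
    by rw [chainLengths_comm],
    sInf_chainLengths_le_add (chainLengths_isMove_nonempty c c')
      (chainLengths_isMove_nonempty c' c'')⟩
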